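/- arXiv:1101.0145 — 7 statements merged into one kernel-verified Lean document; each statement's English description precedes it below -/
import Mathlib

section
/- There is no spherically symmetric probability distribution on the closed unit ball B_d ⊂ ℝ^d with d ≥ 4 whose one-dimensional marginal distributions are uniform on [-1,1]. -/
/-!
If `Z` has uniform marginals on `[-1, 1]`, each coordinate has second moment `1/3`, so
`E ‖Z‖² = ∑ᵢ E Zᵢ² = d/3`. Since `Z` lies in the unit ball, `E ‖Z‖² ≤ 1`, which forces `d ≤ 3`.
-/

open MeasureTheory

theorem lintegral_sq_uniform_Icc_neg_one_one :
    ∫⁻ x, ENNReal.ofReal (x ^ 2) ∂((2 : ENNReal)⁻¹ • volume.restrict (Set.Icc (-1 : ℝ) 1))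
      = 3⁻¹ := by
  have hintegral : ∫ x in Set.Icc (-1 : ℝ) 1, x ^ 2 = 2 / 3 := by
    rw [integral_Icc_eq_integral_Ioc, ← intervalIntegral.integral_of_le (by norm_num),
      integral_pow]
    norm_num
  rw [lintegral_smul_measure, ← ofReal_integral_eq_lintegral_ofReal
    (continuous_pow 2).integrableOn_Icc (.of_forall fun x => sq_nonneg x), hintegral,
    ENNReal.ofReal_div_of_pos (by norm_num), smul_eq_mul, ← mul_div_assoc,
    ENNReal.ofReal_ofNat, ENNReal.ofReal_ofNat,
    ENNReal.inv_mul_cancel (by norm_num) (by norm_num), ENNReal.div_eq_inv_mul, mul_one]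

theorem EuclideanSpace.lintegral_ofReal_norm_sq {ι : Type*} [Fintype ι]
    (μ : Measure (EuclideanSpace ℝ ι)) :
    ∫⁻ z, ENNReal.ofReal (‖z‖ ^ 2) ∂μ = ∑ i, ∫⁻ z, ENNReal.ofReal (z i ^ 2) ∂μ := by
  simp_rw [EuclideanSpace.norm_sq_eq, Real.norm_eq_abs, sq_abs]
  rw [← lintegral_finsetSum _ fun i _ => by fun_prop]
  exact lintegral_congr fun z => ENNReal.ofReal_sum_of_nonneg fun i _ => sq_nonneg _

/-- For d ≥ 4 there is no spherically symmetric probability distribution on the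
closed unit ball of ℝ^d whose one-dimensional marginals are uniform on [-1,1]. -/
theorem stmt_4 (d : ℕ) (hd : 4 ≤ d) :
    ¬ ∃ μ : Measure (EuclideanSpace ℝ (Fin d)),
        IsProbabilityMeasure μ ∧
        μ (Metric.closedBall (0 : EuclideanSpace ℝ (Fin d)) 1) = 1 ∧
        (∀ O : EuclideanSpace ℝ (Fin d) ≃ₗᵢ[ℝ] EuclideanSpace ℝ (Fin d),
          μ.map O = μ) ∧
        (∀ i : Fin d,
          μ.map (fun z => z i)
            = (2 : ENNReal)⁻¹ • volume.restrict (Set.Icc (-1 : ℝ) 1)) := by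
  rintro ⟨μ, hμ, hball, -, hmarg⟩
  have hcoord : ∀ i : Fin d, ∫⁻ z, ENNReal.ofReal (z i ^ 2) ∂μ = 3⁻¹ := fun i => by
    rw [← lintegral_sq_uniform_Icc_neg_one_one, ← hmarg i,
      lintegral_map (by fun_prop) (by fun_prop)]
  have hin_ball : ∀ᵐ z ∂μ, z ∈ Metric.closedBall (0 : EuclideanSpace ℝ (Fin d)) 1 :=
    (ae_mem_iff_measure_eq measurableSet_closedBall.nullMeasurableSet).2
      (by rw [hball, measure_univ])
  have hnorm : ∫⁻ z, ENNReal.ofReal (‖z‖ ^ 2) ∂μ ≤ 1 :=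
    lintegral_le_const <| hin_ball.mono fun z hz => by
      rw [mem_closedBall_zero_iff] at hz
      exact ENNReal.ofReal_le_one.2 (pow_le_one₀ (norm_nonneg z) hz)
  simp only [EuclideanSpace.lintegral_ofReal_norm_sq, hcoord, Finset.sum_const,
    Finset.card_univ, Fintype.card_fin, nsmul_eq_mul] at hnorm
  rw [ENNReal.mul_inv_le_iff (by norm_num) (by norm_num), one_mul] at hnorm
  have : d ≤ 3 := by exact_mod_cast hnorm
  omega
end

section
/- At most one spherically symmetric probability distribution on the unit ball B_d ⊂ ℝ^d has all one-dimensional marginals uniform on [-1,1]: if Z and Z' are two such random vectors, they have the same law. -/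
/-!
The characteristic function of a measure invariant under all linear isometries is radial,
since a reflection carries any vector to any other of the same norm. Along the ray through a
unit vector `e` it is the characteristic function of the one-dimensional marginal `⟪e, ·⟫`.
Hence two such measures with the same marginal have the same characteristic function, and
so are equal.
-/

open MeasureTheory

namespace MeasureTheory

variable {E : Type*} [NormedAddCommGroup E] [InnerProductSpace ℝ E] [MeasurableSpace E]
  [BorelSpace E] {μ ν : Measure E}

theorem charFun_map_linearIsometryEquiv (O : E ≃ₗᵢ[ℝ] E) (t : E) :
    charFun (μ.map O) t = charFun μ (O.symm t) := by
  rw [charFun_apply, charFun_apply, integral_map (by fun_prop) (by fun_prop)]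
  congr 1 with x
  rw [← O.inner_map_map x, O.apply_symm_apply]

theorem charFun_eq_of_norm_eq (hμ : ∀ O : E ≃ₗᵢ[ℝ] E, μ.map O = μ) {s t : E}
    (hst : ‖s‖ = ‖t‖) : charFun μ s = charFun μ t := by
  set O := Submodule.reflection (ℝ ∙ (s - t))ᗮ
  have hO : O.symm s = t := by
    rw [Submodule.reflection_symm]
    exact Submodule.reflection_sub hst
  rw [← hO, ← charFun_map_linearIsometryEquiv, hμ]

theorem charFun_map_inner (e : E) (r : ℝ) :
    charFun (μ.map (fun x => inner ℝ e x)) r = charFun μ (r • e) := by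
  rw [charFun_apply, charFun_apply, integral_map (by fun_prop) (by fun_prop)]
  simp_rw [real_inner_smul_right, real_inner_comm e]
  simp [mul_comm]

theorem Measure.ext_of_map_inner_of_invariant [SecondCountableTopology E] [CompleteSpace E]
    [IsFiniteMeasure μ] [IsFiniteMeasure ν]
    (hμ : ∀ O : E ≃ₗᵢ[ℝ] E, μ.map O = μ) (hν : ∀ O : E ≃ₗᵢ[ℝ] E, ν.map O = ν)
    {e : E} (he : ‖e‖ = 1)
    (h : μ.map (fun x => inner ℝ e x) = ν.map (fun x => inner ℝ e x)) : μ = ν := by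
  refine Measure.ext_of_charFun (funext fun t => ?_)
  have hnorm : ‖‖t‖ • e‖ = ‖t‖ := by simp [norm_smul, he]
  rw [← charFun_eq_of_norm_eq hμ hnorm, ← charFun_eq_of_norm_eq hν hnorm,
    ← charFun_map_inner, ← charFun_map_inner, h]

end MeasureTheory

theorem stmt_7_general (d : ℕ) (μ ν : Measure (EuclideanSpace ℝ (Fin d)))
    (hμprob : IsProbabilityMeasure μ) (hνprob : IsProbabilityMeasure ν)
    (hμsym : ∀ O : EuclideanSpace ℝ (Fin d) ≃ₗᵢ[ℝ] EuclideanSpace ℝ (Fin d),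
      μ.map O = μ)
    (hνsym : ∀ O : EuclideanSpace ℝ (Fin d) ≃ₗᵢ[ℝ] EuclideanSpace ℝ (Fin d),
      ν.map O = ν)
    (hμmarg : ∀ i : Fin d,
      μ.map (fun z => z i)
        = (2 : ENNReal)⁻¹ • volume.restrict (Set.Icc (-1 : ℝ) 1))
    (hνmarg : ∀ i : Fin d,
      ν.map (fun z => z i)
        = (2 : ENNReal)⁻¹ • volume.restrict (Set.Icc (-1 : ℝ) 1)) :
    μ = ν := by
  rcases Nat.eq_zero_or_pos d with rfl | hd
  · exact Measure.ext_of_charFun (funext fun t => by simp [Subsingleton.elim t 0])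
  · let i : Fin d := ⟨0, hd⟩
    have hcoord : (fun z : EuclideanSpace ℝ (Fin d) => inner ℝ (EuclideanSpace.single i 1) z)
        = fun z => z i := by
      ext z
      simp [EuclideanSpace.inner_single_left]
    refine Measure.ext_of_map_inner_of_invariant hμsym hνsym
      (e := EuclideanSpace.single i 1) (by simp) ?_
    rw [hcoord, hμmarg i, hνmarg i]

/-- At most one spherically symmetric probability distribution on the unit ball
of ℝ^d has all one-dimensional marginals uniform on [-1,1]. -/
theorem stmt_7 (d : ℕ) (μ ν : Measure (EuclideanSpace ℝ (Fin d)))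
    (hμprob : IsProbabilityMeasure μ) (hνprob : IsProbabilityMeasure ν)
    (hμball : μ (Metric.closedBall (0 : EuclideanSpace ℝ (Fin d)) 1) = 1)
    (hνball : ν (Metric.closedBall (0 : EuclideanSpace ℝ (Fin d)) 1) = 1)
    (hμsym : ∀ O : EuclideanSpace ℝ (Fin d) ≃ₗᵢ[ℝ] EuclideanSpace ℝ (Fin d),
      μ.map O = μ)
    (hνsym : ∀ O : EuclideanSpace ℝ (Fin d) ≃ₗᵢ[ℝ] EuclideanSpace ℝ (Fin d),
      ν.map O = ν)
    (hμmarg : ∀ i : Fin d,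
      μ.map (fun z => z i)
        = (2 : ENNReal)⁻¹ • volume.restrict (Set.Icc (-1 : ℝ) 1))
    (hνmarg : ∀ i : Fin d,
      ν.map (fun z => z i)
        = (2 : ENNReal)⁻¹ • volume.restrict (Set.Icc (-1 : ℝ) 1)) :
    μ = ν :=
  stmt_7_general d μ ν hμprob hνprob hμsym hνsym hμmarg hνmarg
end

section
/- For all 0 ≤ x, y ≤ 1 with x² + y² < 1, the identity arcsin(x√(1-x²-y²)/(√(1-x²)√(x²+y²))) + arcsin(y√(1-x²-y²)/(√(1-y²)√(x²+y²))) = arcsin(√(1-x²-y²)/√((1-x²)(1-y²))) holds, assuming (x,y) ≠ (0,0). -/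
/-!
With `r = √(x² + y²)`, `pₓ = √(1 - x²)`, `p_y = √(1 - y²)` and `s = √(1 - x² - y²)`, the two
angles on the left have sines `x s / (pₓ r)`, `y s / (p_y r)` and cosines `y / (pₓ r)`,
`x / (p_y r)`. The sine addition formula then gives `sin (α + β) = (x² + y²) s / (pₓ p_y r²)`,
which is the argument on the right, and `cos (α + β) = x y / (pₓ p_y) ≥ 0` keeps `α + β`
in the range `[0, π/2]` of `arcsin`.
-/

open Real

namespace Real

lemma cos_arcsin_of_sq_add_sq {a c : ℝ} (hc : 0 ≤ c) (hac : a ^ 2 + c ^ 2 = 1) :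
    cos (arcsin a) = c := by
  rw [cos_arcsin, show 1 - a ^ 2 = c ^ 2 by linarith, sqrt_sq hc]

/-- `c`, `d` are the cosines of the two angles; `a * b ≤ c * d` says that the cosine of their sum
is nonnegative, so the sum stays in `[0, π/2]`. -/
theorem arcsin_add_arcsin {a b c d : ℝ} (ha : 0 ≤ a) (hb : 0 ≤ b) (hc : 0 ≤ c) (hd : 0 ≤ d)
    (hac : a ^ 2 + c ^ 2 = 1) (hbd : b ^ 2 + d ^ 2 = 1) (habcd : a * b ≤ c * d) :
    arcsin a + arcsin b = arcsin (a * d + b * c) := by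
  have ha1 : a ≤ 1 := by nlinarith
  have hb1 : b ≤ 1 := by nlinarith
  have had : a ≤ d := by
    by_contra! hda
    have hcb : c < b := by nlinarith
    nlinarith [mul_le_mul_of_nonneg_left hda.le hc, mul_lt_mul_of_pos_right hcb (hd.trans_lt hda)]
  have hsum_le : arcsin a + arcsin b ≤ π / 2 := by
    have hd_eq : d = √(1 - b ^ 2) := by
      rw [show 1 - b ^ 2 = d ^ 2 by linarith, sqrt_sq hd]
    have : arcsin a ≤ arccos b := by
      rw [arccos_eq_arcsin hb, ← hd_eq]
      exact arcsin_le_arcsin had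
    linarith [arccos_eq_pi_div_two_sub_arcsin b]
  have hsin : sin (arcsin a + arcsin b) = a * d + b * c := by
    rw [sin_add, sin_arcsin (by linarith) ha1, sin_arcsin (by linarith) hb1,
      cos_arcsin_of_sq_add_sq hc hac, cos_arcsin_of_sq_add_sq hd hbd]
    ring
  rw [← hsin, arcsin_sin _ hsum_le]
  linarith [arcsin_nonneg.mpr ha, arcsin_nonneg.mpr hb, pi_pos]

end Real

lemma div_sq_add_div_sq_eq_one {x y s p r : ℝ} (hp : 0 < p) (hr : 0 < r)
    (hs2 : s ^ 2 = 1 - x ^ 2 - y ^ 2) (hp2 : p ^ 2 = 1 - x ^ 2) (hr2 : r ^ 2 = x ^ 2 + y ^ 2) :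
    (x * s / (p * r)) ^ 2 + (y / (p * r)) ^ 2 = 1 := by
  rw [div_pow, div_pow, ← add_div, div_eq_one_iff_eq (by positivity), mul_pow, mul_pow, hs2, hp2,
    hr2]
  ring

theorem stmt_9_general (x y : ℝ) (hx0 : 0 ≤ x) (hy0 : 0 ≤ y)
    (hxy : x ^ 2 + y ^ 2 < 1) (hne : (x, y) ≠ (0, 0)) :
    Real.arcsin (x * Real.sqrt (1 - x ^ 2 - y ^ 2) /
        (Real.sqrt (1 - x ^ 2) * Real.sqrt (x ^ 2 + y ^ 2)))
      + Real.arcsin (y * Real.sqrt (1 - x ^ 2 - y ^ 2) /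
        (Real.sqrt (1 - y ^ 2) * Real.sqrt (x ^ 2 + y ^ 2)))
      = Real.arcsin (Real.sqrt (1 - x ^ 2 - y ^ 2) /
        Real.sqrt ((1 - x ^ 2) * (1 - y ^ 2))) := by
  have hr0 : 0 < x ^ 2 + y ^ 2 := by
    by_contra! h
    exact hne (by simp [(by nlinarith : x = 0), (by nlinarith : y = 0)])
  have hs2 : √(1 - x ^ 2 - y ^ 2) ^ 2 = 1 - x ^ 2 - y ^ 2 := sq_sqrt (by linarith)
  have hpx2 : √(1 - x ^ 2) ^ 2 = 1 - x ^ 2 := sq_sqrt (by nlinarith)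
  have hpy2 : √(1 - y ^ 2) ^ 2 = 1 - y ^ 2 := sq_sqrt (by nlinarith)
  have hr2 : √(x ^ 2 + y ^ 2) ^ 2 = x ^ 2 + y ^ 2 := sq_sqrt hr0.le
  have hpx : 0 < √(1 - x ^ 2) := sqrt_pos.mpr (by nlinarith)
  have hpy : 0 < √(1 - y ^ 2) := sqrt_pos.mpr (by nlinarith)
  have hr : 0 < √(x ^ 2 + y ^ 2) := sqrt_pos.mpr hr0
  have hs : 0 ≤ √(1 - x ^ 2 - y ^ 2) := sqrt_nonneg _
  rw [sqrt_mul (by nlinarith)]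
  set s := √(1 - x ^ 2 - y ^ 2)
  set px := √(1 - x ^ 2)
  set py := √(1 - y ^ 2)
  set r := √(x ^ 2 + y ^ 2)
  rw [arcsin_add_arcsin (c := y / (px * r)) (d := x / (py * r)) (by positivity) (by positivity)
    (by positivity) (by positivity) (div_sq_add_div_sq_eq_one hpx hr hs2 hpx2 hr2)
    (div_sq_add_div_sq_eq_one hpy hr (by rw [hs2]; ring) hpy2 (by rw [hr2]; ring)) ?_]
  · congr 1
    rw [div_mul_div_comm, div_mul_div_comm, div_add_div _ _ (by positivity) (by positivity),
      div_eq_div_iff (by positivity) (by positivity)]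
    linear_combination -s * px ^ 2 * py ^ 2 * r ^ 2 * hr2
  · rw [div_mul_div_comm, div_mul_div_comm]
    apply div_le_div_of_nonneg_right _ (by positivity)
    nlinarith [mul_nonneg hx0 hy0]

/-- The arcsine identity α + β = γ underlying h(x,y) ≡ π/2 in the paper. -/
theorem stmt_9 (x y : ℝ) (hx0 : 0 ≤ x) (hx1 : x ≤ 1) (hy0 : 0 ≤ y) (hy1 : y ≤ 1)
    (hxy : x ^ 2 + y ^ 2 < 1) (hne : (x, y) ≠ (0, 0)) :
    Real.arcsin (x * Real.sqrt (1 - x ^ 2 - y ^ 2) /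
        (Real.sqrt (1 - x ^ 2) * Real.sqrt (x ^ 2 + y ^ 2)))
      + Real.arcsin (y * Real.sqrt (1 - x ^ 2 - y ^ 2) /
        (Real.sqrt (1 - y ^ 2) * Real.sqrt (x ^ 2 + y ^ 2)))
      = Real.arcsin (Real.sqrt (1 - x ^ 2 - y ^ 2) /
        Real.sqrt ((1 - x ^ 2) * (1 - y ^ 2))) :=
  stmt_9_general x y hx0 hy0 hxy hne
end

section
/- Let (X,Y) be a random vector on [-1,1]² with uniform[-1,1] marginals whose law is invariant under all sign changes: (X,Y) =ᵈ (εX, δY) for ε,δ ∈ {±1}. Then for all (x,y) ∈ [-1,1]², the cdf satisfies F(x,y) = (x+y+1)/4 + σ(xy)·F₀(|x|,|y|), where F₀(x,y) = P[0 ≤ X ≤ x, 0 ≤ Y ≤ y] and σ(w) = sign(w) with σ(0) = 0. -/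
/-!
Reflecting `X ↦ -X` and using that the marginals have no atoms gives
`F(x, y) + F(-x, y) = P[Y ≤ y] = (y + 1) / 2`, and symmetrically in `y`. The claimed formula
satisfies the same two identities, since `sign (x * y)` changes sign under each reflection, so it
suffices to treat `x, y ≥ 0`. There the reflection identities at `0` give `F(0, y) = (y + 1) / 4`,
`F(x, 0) = (x + 1) / 4` and `F(0, 0) = 1 / 4`, and inclusion–exclusion on the rectangle
`(0, x] × (0, y]` yields `F(x, y) = (x + y + 1) / 4 + F₀(x, y)`.
-/

open MeasureTheory Set
open scoped ENNReal

section ProdCongr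

variable {α β : Type*} [MeasurableSpace α] [MeasurableSpace β] {μ : Measure (α × β)}

theorem measure_prod_congr_left {ν : Measure α} (hμ : μ.map Prod.fst ≪ ν) {s s' : Set α}
    (hs : s =ᵐ[ν] s') (t : Set β) : μ (s ×ˢ t) = μ (s' ×ˢ t) :=
  measure_congr <|
    (Measure.QuasiMeasurePreserving.preimage_ae_eq ⟨measurable_fst, hμ⟩ hs).inter .rfl

theorem measure_prod_congr_right {ν : Measure β} (hμ : μ.map Prod.snd ≪ ν) (s : Set α)
    {t t' : Set β} (ht : t =ᵐ[ν] t') : μ (s ×ˢ t) = μ (s ×ˢ t') :=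
  measure_congr <| Filter.EventuallyEq.rfl.inter
    (Measure.QuasiMeasurePreserving.preimage_ae_eq ⟨measurable_snd, hμ⟩ ht)

end ProdCongr

section Plane

variable {μ : Measure (ℝ × ℝ)} [IsFiniteMeasure μ] {s t : Set ℝ}

theorem measureReal_Iic_prod_eq_add {a x : ℝ} (hax : a ≤ x) (ht : MeasurableSet t) :
    μ.real (Iic x ×ˢ t) = μ.real (Iic a ×ˢ t) + μ.real (Ioc a x ×ˢ t) := by
  rw [← Iic_union_Ioc_eq_Iic hax, union_prod, measureReal_union
    ((Iic_disjoint_Ioc le_rfl).set_prod_left _ _) (measurableSet_Ioc.prod ht)]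

theorem measureReal_prod_Iic_eq_add {b y : ℝ} (hby : b ≤ y) (hs : MeasurableSet s) :
    μ.real (s ×ˢ Iic y) = μ.real (s ×ˢ Iic b) + μ.real (s ×ˢ Ioc b y) := by
  rw [← Iic_union_Ioc_eq_Iic hby, prod_union, measureReal_union
    ((Iic_disjoint_Ioc le_rfl).set_prod_right _ _) (hs.prod measurableSet_Ioc)]

theorem measureReal_Ioc_prod_Ioc {a x b y : ℝ} (hax : a ≤ x) (hby : b ≤ y) :
    μ.real (Ioc a x ×ˢ Ioc b y) = μ.real (Iic x ×ˢ Iic y) - μ.real (Iic a ×ˢ Iic y)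
      - μ.real (Iic x ×ˢ Iic b) + μ.real (Iic a ×ˢ Iic b) := by
  have hy := measureReal_Iic_prod_eq_add (μ := μ) (t := Iic y) hax measurableSet_Iic
  have hb := measureReal_Iic_prod_eq_add (μ := μ) (t := Iic b) hax measurableSet_Iic
  have hI := measureReal_prod_Iic_eq_add (μ := μ) (s := Ioc a x) hby measurableSet_Ioc
  linarith

theorem measureReal_Iic_prod_add_Iic_neg_prod (hμ : μ.map Prod.fst ≪ volume)
    (hneg : μ.map (fun p : ℝ × ℝ => (-p.1, p.2)) = μ) (x : ℝ) (ht : MeasurableSet t) :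
    μ.real (Iic x ×ˢ t) + μ.real (Iic (-x) ×ˢ t) = μ.real (univ ×ˢ t) := by
  have hreflect : μ.real (Iic (-x) ×ˢ t) = μ.real (Ioi x ×ˢ t) := by
    conv_lhs => rw [← hneg]
    rw [map_measureReal_apply (by fun_prop) (measurableSet_Iic.prod ht), measureReal_def,
      measureReal_def, measure_prod_congr_left hμ Ioi_ae_eq_Ici]
    congr 2
    ext p
    simp
  rw [hreflect, ← measureReal_union ((Iic_disjoint_Ioi le_rfl).set_prod_left _ _)
    (measurableSet_Ioi.prod ht), ← union_prod, Iic_union_Ioi]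

theorem measureReal_prod_Iic_add_prod_Iic_neg (hμ : μ.map Prod.snd ≪ volume)
    (hneg : μ.map (fun p : ℝ × ℝ => (p.1, -p.2)) = μ) (hs : MeasurableSet s) (y : ℝ) :
    μ.real (s ×ˢ Iic y) + μ.real (s ×ˢ Iic (-y)) = μ.real (s ×ˢ univ) := by
  have hreflect : μ.real (s ×ˢ Iic (-y)) = μ.real (s ×ˢ Ioi y) := by
    conv_lhs => rw [← hneg]
    rw [map_measureReal_apply (by fun_prop) (hs.prod measurableSet_Iic), measureReal_def,
      measureReal_def, measure_prod_congr_right hμ s Ioi_ae_eq_Ici]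
    congr 2
    ext p
    simp
  rw [hreflect, ← measureReal_union ((Iic_disjoint_Ioi le_rfl).set_prod_right _ _)
    (hs.prod measurableSet_Ioi), ← prod_union, Iic_union_Ioi]

end Plane

theorem uniformIcc_real_Iic {x : ℝ} (hx : x ∈ Icc (-1 : ℝ) 1) :
    ((2 : ℝ≥0∞)⁻¹ • volume.restrict (Icc (-1 : ℝ) 1)).real (Iic x) = (x + 1) / 2 := by
  have hinter : Iic x ∩ Icc (-1 : ℝ) 1 = Icc (-1) x := by
    ext r
    simp only [mem_inter_iff, mem_Iic, mem_Icc]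
    exact ⟨fun ⟨hrx, h1r, _⟩ => ⟨h1r, hrx⟩, fun ⟨h1r, hrx⟩ => ⟨hrx, h1r, hrx.trans hx.2⟩⟩
  rw [measureReal_ennreal_smul_apply, measureReal_restrict_apply measurableSet_Iic, hinter,
    Real.volume_real_Icc_of_le hx.1]
  norm_num
  ring

structure IsSignInvariantUniform (μ : Measure (ℝ × ℝ)) : Prop where
  map_fst : μ.map Prod.fst = (2 : ℝ≥0∞)⁻¹ • volume.restrict (Icc (-1 : ℝ) 1)
  map_snd : μ.map Prod.snd = (2 : ℝ≥0∞)⁻¹ • volume.restrict (Icc (-1 : ℝ) 1)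
  map_neg_fst : μ.map (fun p : ℝ × ℝ => (-p.1, p.2)) = μ
  map_neg_snd : μ.map (fun p : ℝ × ℝ => (p.1, -p.2)) = μ

namespace IsSignInvariantUniform

variable {μ : Measure (ℝ × ℝ)}

theorem fst_absolutelyContinuous (h : IsSignInvariantUniform μ) : μ.map Prod.fst ≪ volume :=
  h.map_fst ▸ Measure.smul_absolutelyContinuous.trans Measure.absolutelyContinuous_restrict

theorem snd_absolutelyContinuous (h : IsSignInvariantUniform μ) : μ.map Prod.snd ≪ volume :=
  h.map_snd ▸ Measure.smul_absolutelyContinuous.trans Measure.absolutelyContinuous_restrict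

theorem real_Iic_prod_univ (h : IsSignInvariantUniform μ) {x : ℝ} (hx : x ∈ Icc (-1 : ℝ) 1) :
    μ.real (Iic x ×ˢ univ) = (x + 1) / 2 := by
  rw [prod_univ, ← map_measureReal_apply measurable_fst measurableSet_Iic, h.map_fst,
    uniformIcc_real_Iic hx]

theorem real_univ_prod_Iic (h : IsSignInvariantUniform μ) {y : ℝ} (hy : y ∈ Icc (-1 : ℝ) 1) :
    μ.real (univ ×ˢ Iic y) = (y + 1) / 2 := by
  rw [univ_prod, ← map_measureReal_apply measurable_snd measurableSet_Iic, h.map_snd,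
    uniformIcc_real_Iic hy]

theorem real_Icc_prod_Icc (h : IsSignInvariantUniform μ) (x y : ℝ) :
    μ.real (Icc 0 x ×ˢ Icc 0 y) = μ.real (Ioc 0 x ×ˢ Ioc 0 y) := by
  rw [measureReal_def, measureReal_def,
    measure_prod_congr_left h.fst_absolutelyContinuous Ioc_ae_eq_Icc.symm,
    measure_prod_congr_right h.snd_absolutelyContinuous _ Ioc_ae_eq_Icc.symm]

theorem sign_mul_real_Icc_prod_Icc_of_nonneg (h : IsSignInvariantUniform μ) {x y : ℝ}
    (hx : 0 ≤ x) (hy : 0 ≤ y) :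
    Real.sign (x * y) * μ.real (Icc 0 x ×ˢ Icc 0 y) = μ.real (Icc 0 x ×ˢ Icc 0 y) := by
  rcases (mul_nonneg hx hy).eq_or_lt with hxy | hxy
  · rw [← hxy, Real.sign_zero, zero_mul, h.real_Icc_prod_Icc]
    rcases mul_eq_zero.1 hxy.symm with rfl | rfl <;> simp
  · rw [Real.sign_of_pos hxy, one_mul]

variable [IsFiniteMeasure μ]

theorem real_Iic_neg_prod_Iic (h : IsSignInvariantUniform μ) (x : ℝ) {y : ℝ}
    (hy : y ∈ Icc (-1 : ℝ) 1) :
    μ.real (Iic (-x) ×ˢ Iic y) = (y + 1) / 2 - μ.real (Iic x ×ˢ Iic y) := by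
  rw [← h.real_univ_prod_Iic hy, ← measureReal_Iic_prod_add_Iic_neg_prod
    h.fst_absolutelyContinuous h.map_neg_fst x measurableSet_Iic]
  ring

theorem real_Iic_prod_Iic_neg (h : IsSignInvariantUniform μ) {x : ℝ} (hx : x ∈ Icc (-1 : ℝ) 1)
    (y : ℝ) : μ.real (Iic x ×ˢ Iic (-y)) = (x + 1) / 2 - μ.real (Iic x ×ˢ Iic y) := by
  rw [← h.real_Iic_prod_univ hx, ← measureReal_prod_Iic_add_prod_Iic_neg
    h.snd_absolutelyContinuous h.map_neg_snd measurableSet_Iic y]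
  ring

theorem real_Iic_prod_Iic_of_nonneg (h : IsSignInvariantUniform μ) {x y : ℝ}
    (hx : x ∈ Icc (0 : ℝ) 1) (hy : y ∈ Icc (0 : ℝ) 1) :
    μ.real (Iic x ×ˢ Iic y) = (x + y + 1) / 4 + μ.real (Icc 0 x ×ˢ Icc 0 y) := by
  have hx' : x ∈ Icc (-1 : ℝ) 1 := ⟨by linarith [hx.1], hx.2⟩
  have hy' : y ∈ Icc (-1 : ℝ) 1 := ⟨by linarith [hy.1], hy.2⟩
  have h0y := h.real_Iic_neg_prod_Iic 0 hy'
  have hx0 := h.real_Iic_prod_Iic_neg hx' 0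
  have h00 := h.real_Iic_prod_Iic_neg (x := 0) (by norm_num) 0
  rw [neg_zero] at h0y hx0 h00
  rw [h.real_Icc_prod_Icc, measureReal_Ioc_prod_Ioc hx.1 hy.1]
  linarith

theorem real_Iic_prod_Iic_of_nonneg_left (h : IsSignInvariantUniform μ) {x y : ℝ}
    (hx : x ∈ Icc (0 : ℝ) 1) (hy : y ∈ Icc (-1 : ℝ) 1) :
    μ.real (Iic x ×ˢ Iic y) = (x + y + 1) / 4
      + Real.sign (x * y) * μ.real (Icc 0 |x| ×ˢ Icc 0 |y|) := by
  rw [abs_of_nonneg hx.1]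
  rcases le_or_gt 0 y with hy0 | hy0
  · rw [abs_of_nonneg hy0, h.sign_mul_real_Icc_prod_Icc_of_nonneg hx.1 hy0,
      h.real_Iic_prod_Iic_of_nonneg hx ⟨hy0, hy.2⟩]
  · have hreflect := h.real_Iic_prod_Iic_neg ⟨by linarith [hx.1], hx.2⟩ (-y)
    rw [neg_neg] at hreflect
    have hsign := h.sign_mul_real_Icc_prod_Icc_of_nonneg hx.1 (neg_nonneg.2 hy0.le)
    rw [mul_neg, Real.sign_neg] at hsign
    rw [abs_of_neg hy0, hreflect,
      h.real_Iic_prod_Iic_of_nonneg hx ⟨by linarith, by linarith [hy.1]⟩]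
    linarith

theorem real_Iic_prod_Iic (h : IsSignInvariantUniform μ) {x y : ℝ}
    (hx : x ∈ Icc (-1 : ℝ) 1) (hy : y ∈ Icc (-1 : ℝ) 1) :
    μ.real (Iic x ×ˢ Iic y) = (x + y + 1) / 4
      + Real.sign (x * y) * μ.real (Icc 0 |x| ×ˢ Icc 0 |y|) := by
  rcases le_or_gt 0 x with hx0 | hx0
  · exact h.real_Iic_prod_Iic_of_nonneg_left ⟨hx0, hx.2⟩ hy
  · have hreflect := h.real_Iic_neg_prod_Iic (-x) hy
    rw [neg_neg] at hreflect
    rw [hreflect, h.real_Iic_prod_Iic_of_nonneg_left ⟨by linarith, by linarith [hx.1]⟩ hy,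
      neg_mul, Real.sign_neg, abs_neg]
    ring

end IsSignInvariantUniform

theorem stmt_10_general (μ : Measure (ℝ × ℝ)) (hprob : IsProbabilityMeasure μ)
    (hmarg1 : μ.map Prod.fst
      = (2 : ENNReal)⁻¹ • volume.restrict (Set.Icc (-1 : ℝ) 1))
    (hmarg2 : μ.map Prod.snd
      = (2 : ENNReal)⁻¹ • volume.restrict (Set.Icc (-1 : ℝ) 1))
    (hsign : ∀ ε δ : ℝ, (ε = 1 ∨ ε = -1) → (δ = 1 ∨ δ = -1) →
      μ.map (fun p : ℝ × ℝ => (ε * p.1, δ * p.2)) = μ) :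
    ∀ x ∈ Set.Icc (-1 : ℝ) 1, ∀ y ∈ Set.Icc (-1 : ℝ) 1,
      (μ {p : ℝ × ℝ | p.1 ≤ x ∧ p.2 ≤ y}).toReal
        = (x + y + 1) / 4
          + Real.sign (x * y) *
            (μ {p : ℝ × ℝ | 0 ≤ p.1 ∧ p.1 ≤ |x| ∧ 0 ≤ p.2 ∧ p.2 ≤ |y|}).toReal := by
  intro x hx y hy
  have h : IsSignInvariantUniform μ :=
    ⟨hmarg1, hmarg2, by simpa using hsign (-1) 1 (.inr rfl) (.inl rfl),
      by simpa using hsign 1 (-1) (.inl rfl) (.inr rfl)⟩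
  have hquadrant : {p : ℝ × ℝ | 0 ≤ p.1 ∧ p.1 ≤ |x| ∧ 0 ≤ p.2 ∧ p.2 ≤ |y|}
      = Icc 0 |x| ×ˢ Icc 0 |y| :=
    Set.ext fun _ => and_assoc.symm
  rw [hquadrant]
  exact h.real_Iic_prod_Iic hx hy

/-- For a sign-change invariant law on [-1,1]² with uniform[-1,1] marginals,
F(x,y) = (x+y+1)/4 + sign(xy)·F₀(|x|,|y|). -/
theorem stmt_10 (μ : Measure (ℝ × ℝ)) (hprob : IsProbabilityMeasure μ)
    (hsupp : μ ((Set.Icc (-1 : ℝ) 1 ×ˢ Set.Icc (-1 : ℝ) 1)ᶜ) = 0)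
    (hmarg1 : μ.map Prod.fst
      = (2 : ENNReal)⁻¹ • volume.restrict (Set.Icc (-1 : ℝ) 1))
    (hmarg2 : μ.map Prod.snd
      = (2 : ENNReal)⁻¹ • volume.restrict (Set.Icc (-1 : ℝ) 1))
    (hsign : ∀ ε δ : ℝ, (ε = 1 ∨ ε = -1) → (δ = 1 ∨ δ = -1) →
      μ.map (fun p : ℝ × ℝ => (ε * p.1, δ * p.2)) = μ) :
    ∀ x ∈ Set.Icc (-1 : ℝ) 1, ∀ y ∈ Set.Icc (-1 : ℝ) 1,
      (μ {p : ℝ × ℝ | p.1 ≤ x ∧ p.2 ≤ y}).toReal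
        = (x + y + 1) / 4
          + Real.sign (x * y) *
            (μ {p : ℝ × ℝ | 0 ≤ p.1 ∧ p.1 ≤ |x| ∧ 0 ≤ p.2 ∧ p.2 ≤ |y|}).toReal :=
  stmt_10_general μ hprob hmarg1 hmarg2 hsign
end

section
/- If (X,Y) is uniformly distributed on the open unit disk and U = X/√(1-Y²), V = Y/√(1-X²), then (U,V) has joint density f(u,v) = (1/π)·√((1-u²)(1-v²))/(1-u²v²)² on (-1,1)². -/
/-!
The map `toDisk (u, v) = (φ(u, v), φ(v, u))` with `φ(u, v) = u √(1 - v²) / √(1 - u²v²)` is a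
bijection from the open square `(-1, 1)²` onto the open unit disk, inverse to the map
`(x, y) ↦ (x / √(1 - y²), y / √(1 - x²))`. By the change-of-variables formula, pushing Lebesgue
measure on the disk forward along this inverse gives the density `|det D toDisk|` on the square,
and `det D toDisk (u, v) = √((1 - u²)(1 - v²)) / (1 - u²v²)²`.
-/

open MeasureTheory Real Set

theorem map_restrict_image_eq_withDensity_abs_det_fderiv
    {E : Type*} [NormedAddCommGroup E] [NormedSpace ℝ E] [FiniteDimensional ℝ E]
    [MeasurableSpace E] [BorelSpace E] (μ : Measure E) [μ.IsAddHaarMeasure]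
    {s : Set E} (hs : MeasurableSet s) {f g : E → E} {g' : E → E →L[ℝ] E}
    (hg' : ∀ x ∈ s, HasFDerivWithinAt g (g' x) s x) (hf : Measurable f)
    (hfg : LeftInvOn f g s) :
    (μ.restrict (g '' s)).map f =
      (μ.restrict s).withDensity fun x => ENNReal.ofReal |(g' x).det| := by
  set ν := (μ.restrict s).withDensity fun x => ENNReal.ofReal |(g' x).det|
  have hνμ : ν ≪ μ.restrict s := withDensity_absolutelyContinuous _ _
  have hg : AEMeasurable g ν :=
    (ContinuousOn.aemeasurable (fun x hx => (hg' x hx).continuousWithinAt) hs).mono_ac hνμ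
  have hfg_ae : f ∘ g =ᵐ[ν] id := hνμ.ae_le ((ae_restrict_iff' hs).2 (ae_of_all _ hfg))
  rw [← map_withDensity_abs_det_fderiv_eq_addHaar μ hs.nullMeasurableSet hg' hfg.injOn,
    AEMeasurable.map_map_of_aemeasurable hf.aemeasurable hg, Measure.map_congr hfg_ae,
    Measure.map_id]

noncomputable def rowCLM (a b : ℝ) : ℝ × ℝ →L[ℝ] ℝ :=
  a • ContinuousLinearMap.fst ℝ ℝ ℝ + b • ContinuousLinearMap.snd ℝ ℝ ℝ

@[simp] lemma rowCLM_apply (a b : ℝ) (z : ℝ × ℝ) : rowCLM a b z = a * z.1 + b * z.2 := by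
  simp [rowCLM]

lemma det_rowCLM_prod (a b c d : ℝ) : ((rowCLM a b).prod (rowCLM c d)).det = a * d - b * c := by
  have h : ((rowCLM a b).prod (rowCLM c d) : ℝ × ℝ →ₗ[ℝ] ℝ × ℝ) =
      Matrix.toLin (Module.Basis.finTwoProd ℝ) (Module.Basis.finTwoProd ℝ) !![a, b; c, d] := by
    ext <;> simp [Matrix.toLin_finTwoProd_apply]
  rw [ContinuousLinearMap.det, h, LinearMap.det_toLin, Matrix.det_fin_two_of]

lemma rowCLM_comp_prodComm (a b : ℝ) :
    rowCLM a b ∘L (ContinuousLinearEquiv.prodComm ℝ ℝ ℝ : ℝ × ℝ →L[ℝ] ℝ × ℝ) = rowCLM b a := by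
  ext <;> simp

lemma one_sub_sq_mul_sq_pos {u v : ℝ} (hu : u ^ 2 < 1) (hv : v ^ 2 < 1) : 0 < 1 - u ^ 2 * v ^ 2 := by
  nlinarith [sq_nonneg u, sq_nonneg v]

lemma sq_lt_one_iff_mem_Ioo {x : ℝ} : x ^ 2 < 1 ↔ x ∈ Ioo (-1 : ℝ) 1 := by
  rw [mem_Ioo, ← abs_lt, sq_lt_one_iff_abs_lt_one]

noncomputable def diskCoord (u v : ℝ) : ℝ := u * √(1 - v ^ 2) / √(1 - u ^ 2 * v ^ 2)

-- The gradient of `diskCoord`, simplified using `(1 - u²v²) + u²v² = 1`.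
noncomputable def diskCoordFDeriv (u v : ℝ) : ℝ × ℝ →L[ℝ] ℝ :=
  rowCLM (√(1 - v ^ 2) / √(1 - u ^ 2 * v ^ 2) ^ 3)
    (-(u * v * (1 - u ^ 2)) / (√(1 - v ^ 2) * √(1 - u ^ 2 * v ^ 2) ^ 3))

lemma hasFDerivAt_diskCoord {u v : ℝ} (hu : u ^ 2 < 1) (hv : v ^ 2 < 1) :
    HasFDerivAt (fun q : ℝ × ℝ => diskCoord q.1 q.2) (diskCoordFDeriv u v) (u, v) := by
  have hA : 0 < 1 - v ^ 2 := by linarith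
  have hW := one_sub_sq_mul_sq_pos hu hv
  have hA' : HasFDerivAt (fun q : ℝ × ℝ => √(1 - q.2 ^ 2)) _ (u, v) :=
    ((hasFDerivAt_snd.pow 2).const_sub 1).sqrt hA.ne'
  have hW' : HasFDerivAt (fun q : ℝ × ℝ => √(1 - q.1 ^ 2 * q.2 ^ 2)) _ (u, v) :=
    (((hasFDerivAt_fst.pow 2).fun_mul (hasFDerivAt_snd.pow 2)).const_sub 1).sqrt hW.ne'
  have hWinv := (hasDerivAt_inv (sqrt_pos.2 hW).ne').comp_hasFDerivAt (u, v) hW'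
  have hprod := (hasFDerivAt_fst.fun_mul hA').fun_mul hWinv
  simp only [diskCoord, div_eq_mul_inv]
  refine hprod.congr_fderiv ?_
  have hA0 := (sqrt_pos.2 hA).ne'
  have hW0 := (sqrt_pos.2 hW).ne'
  have hAs := sq_sqrt hA.le
  have hWs := sq_sqrt hW.le
  ext <;>
  simp only [diskCoordFDeriv, rowCLM_apply, one_div, mul_inv_rev, Nat.add_one_sub_one, pow_one,
    nsmul_eq_mul, Nat.cast_ofNat, neg_add_rev, smul_add, smul_neg, neg_smul, neg_neg,
    Function.comp_apply, ContinuousLinearMap.add_comp, ContinuousLinearMap.smul_comp,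
    ContinuousLinearMap.neg_comp, ContinuousLinearMap.fst_comp_inl, ContinuousLinearMap.snd_comp_inl,
    ContinuousLinearMap.fst_comp_inr, ContinuousLinearMap.snd_comp_inr, smul_zero, add_zero,
    neg_zero, zero_add, add_apply, smul_apply, neg_apply, ContinuousLinearMap.id_apply,
    smul_eq_mul, mul_one, mul_zero, ContinuousLinearMap.comp_apply, ContinuousLinearMap.inl_apply, ContinuousLinearMap.inr_apply] <;>
  field_simp <;> rw [hWs]
  · ring
  · rw [hAs]; ring

noncomputable def toDisk (q : ℝ × ℝ) : ℝ × ℝ := (diskCoord q.1 q.2, diskCoord q.2 q.1)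

noncomputable def toDiskFDeriv (q : ℝ × ℝ) : ℝ × ℝ →L[ℝ] ℝ × ℝ :=
  (diskCoordFDeriv q.1 q.2).prod
    (diskCoordFDeriv q.2 q.1 ∘L (ContinuousLinearEquiv.prodComm ℝ ℝ ℝ : ℝ × ℝ →L[ℝ] ℝ × ℝ))

lemma hasFDerivAt_toDisk {q : ℝ × ℝ} (h1 : q.1 ^ 2 < 1) (h2 : q.2 ^ 2 < 1) :
    HasFDerivAt toDisk (toDiskFDeriv q) q := by
  obtain ⟨u, v⟩ := q
  have hswap :=
    (hasFDerivAt_diskCoord h2 h1).comp (u, v) (ContinuousLinearEquiv.prodComm ℝ ℝ ℝ).hasFDerivAt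
  exact (hasFDerivAt_diskCoord h1 h2).prodMk hswap

lemma det_toDiskFDeriv {q : ℝ × ℝ} (h1 : q.1 ^ 2 < 1) (h2 : q.2 ^ 2 < 1) :
    (toDiskFDeriv q).det = √((1 - q.1 ^ 2) * (1 - q.2 ^ 2)) / (1 - q.1 ^ 2 * q.2 ^ 2) ^ 2 := by
  obtain ⟨u, v⟩ := q
  simp only at h1 h2 ⊢
  have hB : 0 < 1 - u ^ 2 := by linarith
  have hA : 0 < 1 - v ^ 2 := by linarith
  have hW := one_sub_sq_mul_sq_pos h1 h2
  simp only [toDiskFDeriv, diskCoordFDeriv, rowCLM_comp_prodComm, det_rowCLM_prod,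
    sqrt_mul hB.le]
  rw [mul_comm (v ^ 2) (u ^ 2)]
  have hA0 := (sqrt_pos.2 hA).ne'
  have hB0 := (sqrt_pos.2 hB).ne'
  have hW0 := (sqrt_pos.2 hW).ne'
  have hAs := sq_sqrt hA.le
  have hBs := sq_sqrt hB.le
  have hWs := sq_sqrt hW.le
  generalize √(1 - v ^ 2) = A at *
  generalize √(1 - u ^ 2) = B at *
  generalize √(1 - u ^ 2 * v ^ 2) = W at *
  rw [← hAs, ← hBs]
  field_simp
  rw [← hWs]
  ring

lemma diskCoord_sq {u v : ℝ} (hu : u ^ 2 < 1) (hv : v ^ 2 < 1) :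
    diskCoord u v ^ 2 = u ^ 2 * (1 - v ^ 2) / (1 - u ^ 2 * v ^ 2) := by
  rw [diskCoord, div_pow, mul_pow, sq_sqrt (by linarith), sq_sqrt (one_sub_sq_mul_sq_pos hu hv).le]

lemma mapsTo_toDisk :
    MapsTo toDisk (Ioo (-1) 1 ×ˢ Ioo (-1) 1) {p : ℝ × ℝ | p.1 ^ 2 + p.2 ^ 2 < 1} := by
  rintro ⟨u, v⟩ ⟨hu : u ∈ Ioo (-1 : ℝ) 1, hv : v ∈ Ioo (-1 : ℝ) 1⟩
  rw [← sq_lt_one_iff_mem_Ioo] at hu hv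
  have hW := one_sub_sq_mul_sq_pos hu hv
  show diskCoord u v ^ 2 + diskCoord v u ^ 2 < 1
  rw [diskCoord_sq hu hv, diskCoord_sq hv hu, mul_comm (v ^ 2) (u ^ 2), ← add_div, div_lt_one hW]
  nlinarith

noncomputable def squareCoord (x y : ℝ) : ℝ := x / √(1 - y ^ 2)

noncomputable def toSquare (p : ℝ × ℝ) : ℝ × ℝ := (squareCoord p.1 p.2, squareCoord p.2 p.1)

lemma squareCoord_diskCoord {u v : ℝ} (hu : u ^ 2 < 1) (hv : v ^ 2 < 1) :
    squareCoord (diskCoord u v) (diskCoord v u) = u := by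
  have hA : 0 < 1 - v ^ 2 := by linarith
  have hW := one_sub_sq_mul_sq_pos hu hv
  have h : 1 - diskCoord v u ^ 2 = (1 - v ^ 2) / (1 - u ^ 2 * v ^ 2) := by
    rw [diskCoord_sq hv hu, mul_comm (v ^ 2) (u ^ 2), one_sub_div hW.ne']
    ring
  rw [squareCoord, h, sqrt_div hA.le, diskCoord]
  field_simp

lemma squareCoord_sq_lt_one {x y : ℝ} (h : x ^ 2 + y ^ 2 < 1) : squareCoord x y ^ 2 < 1 := by
  rw [squareCoord, div_pow, sq_sqrt (by nlinarith), div_lt_one (by nlinarith)]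
  linarith

lemma diskCoord_squareCoord {x y : ℝ} (h : x ^ 2 + y ^ 2 < 1) :
    diskCoord (squareCoord x y) (squareCoord y x) = x := by
  have hx : 0 < 1 - x ^ 2 := by nlinarith
  have hy : 0 < 1 - y ^ 2 := by nlinarith
  have ht : 0 < 1 - x ^ 2 - y ^ 2 := by linarith
  have hxs := sq_sqrt hx.le
  have hys := sq_sqrt hy.le
  have hx0 := (sqrt_pos.2 hx).ne'
  have hy0 := (sqrt_pos.2 hy).ne'
  have ht0 := (sqrt_pos.2 ht).ne'
  have h1 : 1 - squareCoord y x ^ 2 = (1 - x ^ 2 - y ^ 2) / (1 - x ^ 2) := by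
    rw [squareCoord, div_pow, hxs]; field_simp
  have h2 : 1 - squareCoord x y ^ 2 * squareCoord y x ^ 2 =
      (1 - x ^ 2 - y ^ 2) / ((1 - x ^ 2) * (1 - y ^ 2)) := by
    rw [squareCoord, squareCoord, div_pow, div_pow, hxs, hys]; field_simp; ring
  rw [diskCoord, h1, h2, sqrt_div ht.le, sqrt_div ht.le, sqrt_mul hx.le, squareCoord]
  field_simp

lemma mapsTo_toSquare :
    MapsTo toSquare {p : ℝ × ℝ | p.1 ^ 2 + p.2 ^ 2 < 1} (Ioo (-1) 1 ×ˢ Ioo (-1) 1) := by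
  rintro ⟨x, y⟩ (h : x ^ 2 + y ^ 2 < 1)
  exact ⟨sq_lt_one_iff_mem_Ioo.1 (squareCoord_sq_lt_one h),
    sq_lt_one_iff_mem_Ioo.1 (squareCoord_sq_lt_one (by linarith))⟩

lemma invOn_toSquare_toDisk :
    InvOn toSquare toDisk (Ioo (-1) 1 ×ˢ Ioo (-1) 1) {p : ℝ × ℝ | p.1 ^ 2 + p.2 ^ 2 < 1} := by
  constructor
  · rintro ⟨u, v⟩ ⟨hu : u ∈ Ioo (-1 : ℝ) 1, hv : v ∈ Ioo (-1 : ℝ) 1⟩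
    rw [← sq_lt_one_iff_mem_Ioo] at hu hv
    exact Prod.ext (squareCoord_diskCoord hu hv) (squareCoord_diskCoord hv hu)
  · rintro ⟨x, y⟩ (h : x ^ 2 + y ^ 2 < 1)
    exact Prod.ext (diskCoord_squareCoord h) (diskCoord_squareCoord (by linarith))

lemma measurable_toSquare : Measurable toSquare := by
  unfold toSquare squareCoord
  fun_prop

/-- If (X,Y) is uniform on the open unit disk and U = X/√(1-Y²), V = Y/√(1-X²),
then (U,V) has joint density (1/π)√((1-u²)(1-v²))/(1-u²v²)² on (-1,1)². -/
theorem stmt_15 (μ : Measure (ℝ × ℝ))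
    (hμ : μ = (ENNReal.ofReal Real.pi)⁻¹ •
      volume.restrict {p : ℝ × ℝ | p.1 ^ 2 + p.2 ^ 2 < 1}) :
    μ.map (fun p : ℝ × ℝ =>
        (p.1 / Real.sqrt (1 - p.2 ^ 2), p.2 / Real.sqrt (1 - p.1 ^ 2)))
      = volume.withDensity (fun q : ℝ × ℝ =>
          ENNReal.ofReal (Set.indicator (Set.Ioo (-1 : ℝ) 1 ×ˢ Set.Ioo (-1 : ℝ) 1)
            (fun q => (1 / Real.pi) *
              Real.sqrt ((1 - q.1 ^ 2) * (1 - q.2 ^ 2)) /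
                (1 - q.1 ^ 2 * q.2 ^ 2) ^ 2) q)) := by
  set s := Ioo (-1 : ℝ) 1 ×ˢ Ioo (-1 : ℝ) 1
  have hs : MeasurableSet s := measurableSet_Ioo.prod measurableSet_Ioo
  have hsq : ∀ q ∈ s, q.1 ^ 2 < 1 ∧ q.2 ^ 2 < 1 := fun q hq =>
    ⟨sq_lt_one_iff_mem_Ioo.2 hq.1, sq_lt_one_iff_mem_Ioo.2 hq.2⟩
  have hbij : BijOn toDisk s _ := invOn_toSquare_toDisk.bijOn mapsTo_toDisk mapsTo_toSquare
  change μ.map toSquare = _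
  rw [hμ, Measure.map_smul, ← hbij.image_eq,
    map_restrict_image_eq_withDensity_abs_det_fderiv volume hs
      (fun q hq => (hasFDerivAt_toDisk (hsq q hq).1 (hsq q hq).2).hasFDerivWithinAt)
      measurable_toSquare invOn_toSquare_toDisk.1,
    ← withDensity_smul' _ _ (by simp [pi_pos]), ← withDensity_indicator hs]
  congr 1
  funext q
  by_cases hq : q ∈ s
  · have hdet := det_toDiskFDeriv (hsq q hq).1 (hsq q hq).2
    rw [indicator_of_mem hq, indicator_of_mem hq, Pi.smul_apply, smul_eq_mul, hdet,
      abs_of_nonneg (by positivity), mul_div_assoc, ENNReal.ofReal_mul (by positivity), one_div,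
      ENNReal.ofReal_inv_of_pos pi_pos]
  · rw [indicator_of_notMem hq, indicator_of_notMem hq, ENNReal.ofReal_zero]
end

section
/- For 0 ≤ u, v ≤ 1 with (u,v) ≠ (1,1), the area of the intersection of the two ellipses E₁(u) = {(x,y) : x²/u² + y² ≤ 1} and E₂(v) = {(x,y) : x² + y²/v² ≤ 1} equals 2u·arcsin(v√(1-u²)/√(1-u²v²)) + 2v·arcsin(u√(1-v²)/√(1-u²v²)). -/
/-!
The first-quadrant corner `(a, b)` of the intersection is characterised by
`a² = u² (1 - b²)` and `b² = v² (1 - a²)`. The intersection is the union of the part of `E₂`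
over `|x| ≤ a` and the part of `E₁` over `|y| ≤ b`, which overlap exactly in the rectangle
`[-a, a] × [-b, b]`. Integrating `√(1 - x²)`, the first piece has area
`2v (arcsin a + a √(1 - a²)) = 2v arcsin a + 2ab` and the second `2u arcsin b + 2ab`, so by
inclusion–exclusion the area is `2v arcsin a + 2u arcsin b`.
-/

open MeasureTheory Real Set

lemma hasDerivAt_arcsin_add_mul_sqrt_one_sub_sq {x : ℝ} (h₁ : -1 < x) (h₂ : x < 1) :
    HasDerivAt (fun y => arcsin y + y * √(1 - y ^ 2)) (2 * √(1 - x ^ 2)) x := by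
  have hpos : 0 < 1 - x ^ 2 := by nlinarith
  have hsqrt : HasDerivAt (fun y : ℝ => √(1 - y ^ 2)) (-(2 * x) / (2 * √(1 - x ^ 2))) x := by
    simpa using ((hasDerivAt_pow 2 x).const_sub 1).sqrt hpos.ne'
  refine ((hasDerivAt_arcsin h₁.ne' h₂.ne).add ((hasDerivAt_id' x).mul hsqrt)).congr_deriv ?_
  have hsq := sq_sqrt hpos.le
  field_simp
  linear_combination -hsq

theorem integral_sqrt_one_sub_sq_of_le {a b : ℝ} (ha : -1 ≤ a) (hab : a ≤ b) (hb : b ≤ 1) :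
    ∫ x in a..b, √(1 - x ^ 2) =
      ((arcsin b + b * √(1 - b ^ 2)) - (arcsin a + a * √(1 - a ^ 2))) / 2 := by
  have h := intervalIntegral.integral_eq_sub_of_hasDerivAt_of_le hab (by fun_prop)
    (fun x hx => hasDerivAt_arcsin_add_mul_sqrt_one_sub_sq (ha.trans_lt hx.1) (hx.2.trans_le hb))
    ((by fun_prop : Continuous fun x : ℝ => 2 * √(1 - x ^ 2)).intervalIntegrable a b)
  rw [intervalIntegral.integral_const_mul] at h
  linarith

theorem volume_region_between_cc_eq_lintegral {α : Type*} [MeasurableSpace α] {μ : Measure α}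
    [SFinite μ] {f g : α → ℝ} {s : Set α} (hf : Measurable f) (hg : Measurable g)
    (hs : MeasurableSet s) :
    μ.prod volume {p : α × ℝ | p.1 ∈ s ∧ p.2 ∈ Icc (f p.1) (g p.1)} =
      ∫⁻ x in s, ENNReal.ofReal (g x - f x) ∂μ := by
  rw [Measure.prod_apply (measurableSet_region_between_cc hf hg hs),
    ← lintegral_indicator hs]
  congr 1 with x
  by_cases hx : x ∈ s
  · rw [indicator_of_mem hx, ← Real.volume_Icc]
    congr 1 with y
    simp [hx]
  · simp [hx]

theorem volume_ellipse_strip {a c : ℝ} (ha₀ : 0 ≤ a) (ha₁ : a ≤ 1) (hc : 0 ≤ c) :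
    volume {p : ℝ × ℝ | p.1 ^ 2 ≤ a ^ 2 ∧ p.2 ^ 2 ≤ c ^ 2 * (1 - p.1 ^ 2)} =
      ENNReal.ofReal (2 * c * (arcsin a + a * √(1 - a ^ 2))) := by
  set g : ℝ → ℝ := fun x => c * √(1 - x ^ 2)
  have hg : Continuous g := by fun_prop
  have hstrip : {p : ℝ × ℝ | p.1 ^ 2 ≤ a ^ 2 ∧ p.2 ^ 2 ≤ c ^ 2 * (1 - p.1 ^ 2)} =
      {p : ℝ × ℝ | p.1 ∈ Icc (-a) a ∧ p.2 ∈ Icc (-g p.1) (g p.1)} := by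
    ext ⟨x, y⟩
    simp only [mem_ofPred_eq, mem_Icc, ← abs_le]
    rw [← sq_le_sq₀ (abs_nonneg x) ha₀, sq_abs]
    refine and_congr_right fun hx => ?_
    have hx₁ : 0 ≤ 1 - x ^ 2 := by nlinarith
    rw [← sq_le_sq₀ (abs_nonneg y) (by positivity), sq_abs, mul_pow, sq_sqrt hx₁]
  rw [hstrip, Measure.volume_eq_prod, volume_region_between_cc_eq_lintegral (f := fun x => -g x)
    hg.neg.measurable hg.measurable measurableSet_Icc, ← ofReal_integral_eq_lintegral_ofReal]
  · congr 1
    rw [integral_Icc_eq_integral_Ioc, ← intervalIntegral.integral_of_le (by linarith)]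
    simp only [g, sub_neg_eq_add, ← two_mul, ← mul_assoc, intervalIntegral.integral_const_mul]
    rw [integral_sqrt_one_sub_sq_of_le (by linarith) (by linarith) ha₁, arcsin_neg, neg_sq]
    ring
  · exact (hg.sub hg.neg).integrableOn_Icc
  · exact Filter.Eventually.of_forall fun x => by simp only [g, sub_neg_eq_add]; positivity

section Corner

variable {u v a b : ℝ}

theorem ellipse_inter_eq_union_strips (ha : a ^ 2 = u ^ 2 * (1 - b ^ 2))
    (hb : b ^ 2 = v ^ 2 * (1 - a ^ 2)) (huv : u ^ 2 * v ^ 2 ≤ 1) :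
    {p : ℝ × ℝ | p.1 ^ 2 ≤ u ^ 2 * (1 - p.2 ^ 2)} ∩
        {p | p.2 ^ 2 ≤ v ^ 2 * (1 - p.1 ^ 2)} =
      {p | p.1 ^ 2 ≤ a ^ 2 ∧ p.2 ^ 2 ≤ v ^ 2 * (1 - p.1 ^ 2)} ∪
        {p | p.2 ^ 2 ≤ b ^ 2 ∧ p.1 ^ 2 ≤ u ^ 2 * (1 - p.2 ^ 2)} := by
  ext ⟨x, y⟩
  simp only [mem_inter_iff, mem_union, mem_ofPred_eq]
  constructor
  · rintro ⟨hx, hy⟩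
    by_cases hxa : x ^ 2 ≤ a ^ 2
    · exact .inl ⟨hxa, hy⟩
    · refine .inr ⟨?_, hx⟩
      by_contra! hyb
      nlinarith [mul_le_mul_of_nonneg_left hyb.le (sq_nonneg u)]
  · rintro (⟨hxa, hy⟩ | ⟨hyb, hx⟩)
    · refine ⟨?_, hy⟩
      nlinarith [mul_nonneg (sub_nonneg.2 hxa) (sub_nonneg.2 huv),
        mul_nonneg (sq_nonneg u) (sub_nonneg.2 hy)]
    · refine ⟨hx, ?_⟩
      nlinarith [mul_nonneg (sub_nonneg.2 hyb) (sub_nonneg.2 huv),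
        mul_nonneg (sq_nonneg v) (sub_nonneg.2 hx)]

theorem inter_ellipse_strips_eq_Icc_prod_Icc (ha : a ^ 2 = u ^ 2 * (1 - b ^ 2))
    (hb : b ^ 2 = v ^ 2 * (1 - a ^ 2)) (ha₀ : 0 ≤ a) (hb₀ : 0 ≤ b) :
    {p : ℝ × ℝ | p.1 ^ 2 ≤ a ^ 2 ∧ p.2 ^ 2 ≤ v ^ 2 * (1 - p.1 ^ 2)} ∩
        {p | p.2 ^ 2 ≤ b ^ 2 ∧ p.1 ^ 2 ≤ u ^ 2 * (1 - p.2 ^ 2)} =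
      Icc (-a) a ×ˢ Icc (-b) b := by
  ext ⟨x, y⟩
  simp only [mem_inter_iff, mem_ofPred_eq, mem_prod, mem_Icc, ← abs_le,
    ← sq_le_sq₀ (abs_nonneg _) ha₀, ← sq_le_sq₀ (abs_nonneg _) hb₀, sq_abs]
  constructor
  · rintro ⟨⟨hx, -⟩, hy, -⟩
    exact ⟨hx, hy⟩
  · rintro ⟨hx, hy⟩
    refine ⟨⟨hx, ?_⟩, hy, ?_⟩
    · nlinarith [mul_le_mul_of_nonneg_left hx (sq_nonneg v)]
    · nlinarith [mul_le_mul_of_nonneg_left hy (sq_nonneg u)]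

theorem volume_real_ellipse_inter_of_corner (ha : a ^ 2 = u ^ 2 * (1 - b ^ 2))
    (hb : b ^ 2 = v ^ 2 * (1 - a ^ 2)) (hu₀ : 0 ≤ u) (hu₁ : u ≤ 1) (hv₀ : 0 ≤ v) (hv₁ : v ≤ 1)
    (ha₀ : 0 ≤ a) (hb₀ : 0 ≤ b) :
    volume.real ({p : ℝ × ℝ | p.1 ^ 2 ≤ u ^ 2 * (1 - p.2 ^ 2)} ∩
        {p | p.2 ^ 2 ≤ v ^ 2 * (1 - p.1 ^ 2)}) = 2 * v * arcsin a + 2 * u * arcsin b := by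
  have ha₁ : a ≤ 1 := by nlinarith
  have hb₁ : b ≤ 1 := by nlinarith
  have hA := volume_ellipse_strip ha₀ ha₁ hv₀
  have hB : volume {p : ℝ × ℝ | p.2 ^ 2 ≤ b ^ 2 ∧ p.1 ^ 2 ≤ u ^ 2 * (1 - p.2 ^ 2)} =
      ENNReal.ofReal (2 * u * (arcsin b + b * √(1 - b ^ 2))) := by
    -- this piece is the preimage of an `E₂`-type strip under `Prod.swap`
    rw [← volume_ellipse_strip hb₀ hb₁ hu₀, Measure.volume_eq_prod]
    exact (Measure.measurePreserving_swap (μ := (volume : Measure ℝ)) (ν := volume))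
      |>.measure_preimage_emb (MeasurableEquiv.prodComm (α := ℝ) (β := ℝ)).measurableEmbedding
      {p | p.1 ^ 2 ≤ b ^ 2 ∧ p.2 ^ 2 ≤ u ^ 2 * (1 - p.1 ^ 2)}
  have hBmeas : MeasurableSet
      {p : ℝ × ℝ | p.2 ^ 2 ≤ b ^ 2 ∧ p.1 ^ 2 ≤ u ^ 2 * (1 - p.2 ^ 2)} :=
    (measurableSet_le (f := fun p : ℝ × ℝ => p.2 ^ 2) (by fun_prop) (by fun_prop)).inter
      (measurableSet_le (f := fun p : ℝ × ℝ => p.1 ^ 2) (by fun_prop) (by fun_prop))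
  have huv : u ^ 2 * v ^ 2 ≤ 1 := by
    rw [← mul_pow]
    exact pow_le_one₀ (by positivity) (mul_le_one₀ hu₁ hv₀ hv₁)
  have hvb : v * √(1 - a ^ 2) = b := by
    rw [← sqrt_sq hv₀, ← sqrt_mul (sq_nonneg v), ← hb, sqrt_sq hb₀]
  have hua : u * √(1 - b ^ 2) = a := by
    rw [← sqrt_sq hu₀, ← sqrt_mul (sq_nonneg u), ← ha, sqrt_sq ha₀]
  have key := measureReal_union_add_inter (μ := volume)
    (s := {p : ℝ × ℝ | p.1 ^ 2 ≤ a ^ 2 ∧ p.2 ^ 2 ≤ v ^ 2 * (1 - p.1 ^ 2)}) hBmeas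
    (by simp [hA]) (by simp [hB])
  rw [← ellipse_inter_eq_union_strips ha hb huv,
    inter_ellipse_strips_eq_Icc_prod_Icc ha hb ha₀ hb₀, Measure.volume_eq_prod,
    measureReal_prod_prod, ← Measure.volume_eq_prod, Real.volume_real_Icc, Real.volume_real_Icc,
    max_eq_left (by linarith), max_eq_left (by linarith)] at key
  simp only [measureReal_def, hA, hB] at key ⊢
  have harcsin_a := arcsin_nonneg.2 ha₀
  have harcsin_b := arcsin_nonneg.2 hb₀
  rw [ENNReal.toReal_ofReal (by positivity), ENNReal.toReal_ofReal (by positivity)] at key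
  linear_combination key + 2 * a * hvb + 2 * b * hua

end Corner

theorem ellipse_corner_sq {u v : ℝ} (hu : u ^ 2 ≤ 1) (hv : v ^ 2 ≤ 1)
    (huv : u ^ 2 * v ^ 2 < 1) :
    (u * √(1 - v ^ 2) / √(1 - u ^ 2 * v ^ 2)) ^ 2 =
      u ^ 2 * (1 - (v * √(1 - u ^ 2) / √(1 - u ^ 2 * v ^ 2)) ^ 2) := by
  rw [div_pow, div_pow, mul_pow, mul_pow, sq_sqrt (by linarith), sq_sqrt (by linarith),
    sq_sqrt (by linarith)]
  have hD : 1 - u ^ 2 * v ^ 2 ≠ 0 := (sub_pos.2 huv).ne'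
  field_simp
  ring

/-- Area of the intersection of the ellipses x²/u² + y² ≤ 1 and x² + y²/v² ≤ 1
(written as x² ≤ u²(1-y²) and y² ≤ v²(1-x²) to handle the degenerate cases). -/
theorem stmt_17 (u v : ℝ) (hu0 : 0 ≤ u) (hu1 : u ≤ 1) (hv0 : 0 ≤ v) (hv1 : v ≤ 1)
    (hne : (u, v) ≠ (1, 1)) :
    (volume ({p : ℝ × ℝ | p.1 ^ 2 ≤ u ^ 2 * (1 - p.2 ^ 2)} ∩
        {p : ℝ × ℝ | p.2 ^ 2 ≤ v ^ 2 * (1 - p.1 ^ 2)})).toReal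
      = 2 * u * Real.arcsin (v * Real.sqrt (1 - u ^ 2) /
          Real.sqrt (1 - u ^ 2 * v ^ 2))
        + 2 * v * Real.arcsin (u * Real.sqrt (1 - v ^ 2) /
          Real.sqrt (1 - u ^ 2 * v ^ 2)) := by
  have hu : u ^ 2 ≤ 1 := pow_le_one₀ hu0 hu1
  have hv : v ^ 2 ≤ 1 := pow_le_one₀ hv0 hv1
  have huv : u ^ 2 * v ^ 2 < 1 := by
    by_contra! h
    exact hne (Prod.ext (by nlinarith) (by nlinarith))
  have hcorner₁ := ellipse_corner_sq hu hv huv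
  have hcorner₂ := ellipse_corner_sq hv hu (by linarith [mul_comm (u ^ 2) (v ^ 2)])
  rw [mul_comm (v ^ 2)] at hcorner₂
  rw [← measureReal_def, volume_real_ellipse_inter_of_corner hcorner₁ hcorner₂ hu0 hu1 hv0 hv1
    (by positivity) (by positivity)]
  ring
end

section
/- For 0 ≤ x, y ≤ 1 with x² + y² < 1, the complementary cdf of the distribution with density 1/(2π√(1-s²-t²)) on the unit disk satisfies P[X > x, Y > y] = (1-x-y)/4 + α(x,y), where α(x,y) = (1/(2π))[x·arcsin(y/√(1-x²)) + y·arcsin(x/√(1-y²)) - arcsin(xy/√((1-x²)(1-y²)))]. -/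
/-!
Slicing the region at abscissa `s ∈ (x, √(1 - y²))`, the inner integral over
`t ∈ (y, √(1 - s²))` is an arcsine integral and equals `(π/2 - arcsin (y / √(1 - s²))) / (2π)`.
The outer integrand is nonnegative, hence integrable as soon as it has a primitive, and it has
the explicit primitive `π s / 2 - 2π α(s, y)`; at the right end `s = √(1 - y²)` all three
arcsines in `α` equal `π/2`, which leaves `(1 - x - y)/4`.
-/

open MeasureTheory Real Set

lemma integral_prod_eq_of_nonneg {α β : Type*} [MeasurableSpace α] [MeasurableSpace β]
    {μ : Measure α} {ν : Measure β} [SFinite μ] [SFinite ν] {f : α × β → ℝ}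
    (hf : AEStronglyMeasurable f (μ.prod ν)) (hf0 : 0 ≤ f)
    (hslice : ∀ᵐ a ∂μ, Integrable (fun b => f (a, b)) ν)
    (hint : Integrable (fun a => ∫ b, f (a, b) ∂ν) μ) :
    ∫ p, f p ∂(μ.prod ν) = ∫ a, ∫ b, f (a, b) ∂ν ∂μ := by
  refine integral_prod f ((integrable_prod_iff hf).2 ⟨hslice, ?_⟩)
  simpa only [Real.norm_of_nonneg (hf0 _)] using hint

lemma integral_Ioo_eq_sub_of_hasDerivAt_of_nonneg {g g' : ℝ → ℝ} {a b : ℝ} (hab : a ≤ b)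
    (hcont : ContinuousOn g (Icc a b)) (hderiv : ∀ t ∈ Ioo a b, HasDerivAt g (g' t) t)
    (hpos : ∀ t ∈ Ioo a b, 0 ≤ g' t) :
    IntegrableOn g' (Ioo a b) ∧ ∫ t in Ioo a b, g' t = g b - g a := by
  have hint : IntegrableOn g' (Ioc a b) :=
    intervalIntegral.integrableOn_deriv_of_nonneg hcont hderiv hpos
  refine ⟨hint.mono_set Ioo_subset_Ioc_self, ?_⟩
  rw [← integral_Ioc_eq_integral_Ioo, ← intervalIntegral.integral_of_le hab]
  exact intervalIntegral.integral_eq_sub_of_hasDerivAt_of_le hab hcont hderiv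
    ((intervalIntegrable_iff_integrableOn_Ioc_of_le hab).2 hint)

lemma HasDerivAt.arcsin_of_sq_lt_one {f : ℝ → ℝ} {f' s : ℝ} (hf : HasDerivAt f f' s)
    (h : f s ^ 2 < 1) : HasDerivAt (fun s => arcsin (f s)) (f' / √(1 - f s ^ 2)) s := by
  obtain ⟨hlo, hhi⟩ := abs_lt.1 ((sq_lt_one_iff_abs_lt_one _).1 h)
  exact ((hasDerivAt_arcsin hlo.ne' hhi.ne).comp s hf).congr_deriv (by ring)

lemma sqrt_one_sub_div_sq {u v : ℝ} (hv : 0 < v) :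
    √(1 - (u / v) ^ 2) = √(v ^ 2 - u ^ 2) / v := by
  have h : 1 - (u / v) ^ 2 = (v ^ 2 - u ^ 2) / v ^ 2 := by field_simp
  rw [h, sqrt_div' _ (by positivity), sqrt_sq hv.le]

lemma hasDerivAt_sqrt_one_sub_sq {s : ℝ} (hs : s ^ 2 < 1) :
    HasDerivAt (fun s => √(1 - s ^ 2)) (-s / √(1 - s ^ 2)) s := by
  have hp : HasDerivAt (fun s : ℝ => 1 - s ^ 2) (-(2 * s)) s := by
    simpa using (hasDerivAt_pow 2 s).const_sub 1
  refine (hp.sqrt (by linarith)).congr_deriv ?_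
  field_simp

lemma hasDerivAt_arcsin_div {c t : ℝ} (hc : 0 < c) (ht : t ^ 2 < c ^ 2) :
    HasDerivAt (fun t => arcsin (t / c)) (1 / √(c ^ 2 - t ^ 2)) t := by
  have harg : (t / c) ^ 2 < 1 := by rw [div_pow, div_lt_one (by positivity)]; exact ht
  refine (((hasDerivAt_id t).div_const c).arcsin_of_sq_lt_one harg).congr_deriv ?_
  rw [id_eq, sqrt_one_sub_div_sq hc]
  field_simp

lemma integral_Ioo_one_div_sqrt_sq_sub_sq {y c : ℝ} (hy : -c ≤ y) (hyc : y < c) :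
    IntegrableOn (fun t => 1 / √(c ^ 2 - t ^ 2)) (Ioo y c) ∧
      ∫ t in Ioo y c, 1 / √(c ^ 2 - t ^ 2) = π / 2 - arcsin (y / c) := by
  have hc : 0 < c := by linarith
  have hderiv : ∀ t ∈ Ioo y c,
      HasDerivAt (fun t => arcsin (t / c)) (1 / √(c ^ 2 - t ^ 2)) t := fun t ht =>
    hasDerivAt_arcsin_div hc (sq_lt_sq' (by linarith [ht.1]) ht.2)
  have hcont : ContinuousOn (fun t => arcsin (t / c)) (Icc y c) := by fun_prop
  have hpos : ∀ t ∈ Ioo y c, 0 ≤ 1 / √(c ^ 2 - t ^ 2) := fun t _ => by positivity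
  simpa only [div_self hc.ne', arcsin_one] using
    integral_Ioo_eq_sub_of_hasDerivAt_of_nonneg hyc.le hcont hderiv hpos

/-- `2π α(x, y)` in the paper's notation. -/
noncomputable def cornerTerm (x y : ℝ) : ℝ :=
  x * arcsin (y / √(1 - x ^ 2)) + y * arcsin (x / √(1 - y ^ 2))
    - arcsin (x * y / √((1 - x ^ 2) * (1 - y ^ 2)))

lemma hasDerivAt_cornerTerm {s y : ℝ} (h : s ^ 2 + y ^ 2 < 1) :
    HasDerivAt (fun s => cornerTerm s y) (arcsin (y / √(1 - s ^ 2))) s := by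
  have hs1 : 0 < 1 - s ^ 2 := by nlinarith
  have hy1 : 0 < 1 - y ^ 2 := by nlinarith
  have hc : 0 < √(1 - s ^ 2) := sqrt_pos.2 hs1
  have hb : 0 < √(1 - y ^ 2) := sqrt_pos.2 hy1
  have hc2 : √(1 - s ^ 2) ^ 2 = 1 - s ^ 2 := sq_sqrt hs1.le
  have hb2 : √(1 - y ^ 2) ^ 2 = 1 - y ^ 2 := sq_sqrt hy1.le
  have hD : 0 < √(1 - s ^ 2 - y ^ 2) := sqrt_pos.2 (by linarith)
  have hc' := hasDerivAt_sqrt_one_sub_sq (by linarith : s ^ 2 < 1)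
  have d1 : HasDerivAt (fun r => arcsin (y / √(1 - r ^ 2)))
      (s * y / ((1 - s ^ 2) * √(1 - s ^ 2 - y ^ 2))) s := by
    have harg : (y / √(1 - s ^ 2)) ^ 2 < 1 := by
      rw [div_pow, hc2, div_lt_one hs1]; linarith
    refine (((hasDerivAt_const s y).div hc' hc.ne').arcsin_of_sq_lt_one harg).congr_deriv ?_
    rw [Pi.div_apply, sqrt_one_sub_div_sq hc, hc2]
    field_simp
    ring
  have d2 : HasDerivAt (fun r => arcsin (r / √(1 - y ^ 2))) (1 / √(1 - s ^ 2 - y ^ 2)) s := by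
    refine (hasDerivAt_arcsin_div hb (by rw [hb2]; linarith)).congr_deriv ?_
    rw [hb2, sub_right_comm]
  have d3 : HasDerivAt (fun r => arcsin (r * y / (√(1 - r ^ 2) * √(1 - y ^ 2))))
      (y / ((1 - s ^ 2) * √(1 - s ^ 2 - y ^ 2))) s := by
    have harg : (s * y / (√(1 - s ^ 2) * √(1 - y ^ 2))) ^ 2 < 1 := by
      rw [div_pow, mul_pow, mul_pow, hc2, hb2, div_lt_one (by positivity)]; nlinarith
    refine ((((hasDerivAt_id' s).mul_const y).div (hc'.mul_const _)
      (by positivity)).arcsin_of_sq_lt_one harg).congr_deriv ?_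
    rw [Pi.div_apply, sqrt_one_sub_div_sq (by positivity), mul_pow, mul_pow, hc2, hb2,
      show (1 - s ^ 2) * (1 - y ^ 2) - s ^ 2 * y ^ 2 = 1 - s ^ 2 - y ^ 2 by ring]
    field_simp
    linear_combination y * √(1 - y ^ 2) ^ 2 * hc2 + y * hb2
  have hcorner : (fun s => cornerTerm s y) = fun r => r * arcsin (y / √(1 - r ^ 2))
      + y * arcsin (r / √(1 - y ^ 2)) - arcsin (r * y / (√(1 - r ^ 2) * √(1 - y ^ 2))) := by
    funext r
    rw [cornerTerm, sqrt_mul' _ hy1.le]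
  rw [hcorner]
  refine ((((hasDerivAt_id' s).mul d1).add (d2.const_mul y)).sub d3).congr_deriv ?_
  field_simp
  ring

lemma continuousOn_cornerTerm {y : ℝ} (hy : y ^ 2 < 1) :
    ContinuousOn (fun s => cornerTerm s y) {s | s ^ 2 + y ^ 2 ≤ 1} := by
  rcases eq_or_ne y 0 with rfl | hy0
  · simpa [cornerTerm] using continuousOn_const
  have hs : ∀ s ∈ {s : ℝ | s ^ 2 + y ^ 2 ≤ 1}, 0 < 1 - s ^ 2 := fun s hs => by
    have : 0 < y ^ 2 := by positivity
    linarith [hs.out]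
  have hy' : 0 < 1 - y ^ 2 := by linarith
  have hc : ∀ s ∈ {s : ℝ | s ^ 2 + y ^ 2 ≤ 1}, √(1 - s ^ 2) ≠ 0 := fun s h =>
    (sqrt_pos.2 (hs s h)).ne'
  have hb : ∀ s ∈ {s : ℝ | s ^ 2 + y ^ 2 ≤ 1}, √(1 - y ^ 2) ≠ 0 := fun _ _ =>
    (sqrt_pos.2 hy').ne'
  have hcb : ∀ s ∈ {s : ℝ | s ^ 2 + y ^ 2 ≤ 1}, √((1 - s ^ 2) * (1 - y ^ 2)) ≠ 0 := fun s h =>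
    (sqrt_pos.2 (mul_pos (hs s h) hy')).ne'
  unfold cornerTerm
  fun_prop (disch := assumption)

lemma integral_Ioo_pi_div_two_sub_arcsin {x y : ℝ} (hy : y ^ 2 < 1) (hx : -√(1 - y ^ 2) ≤ x)
    (hxb : x ≤ √(1 - y ^ 2)) :
    IntegrableOn (fun s => π / 2 - arcsin (y / √(1 - s ^ 2))) (Ioo x √(1 - y ^ 2)) ∧
      ∫ s in Ioo x √(1 - y ^ 2), (π / 2 - arcsin (y / √(1 - s ^ 2))) =
        π / 2 * (√(1 - y ^ 2) - x) - cornerTerm √(1 - y ^ 2) y + cornerTerm x y := by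
  have hb2 : √(1 - y ^ 2) ^ 2 = 1 - y ^ 2 := sq_sqrt (by linarith)
  have hcont : ContinuousOn (fun s => π / 2 * s - cornerTerm s y) (Icc x √(1 - y ^ 2)) := by
    refine (continuous_const.mul continuous_id).continuousOn.sub
      ((continuousOn_cornerTerm hy).mono fun s hs => ?_)
    have := sq_le_sq' (hx.trans hs.1) hs.2
    show s ^ 2 + y ^ 2 ≤ 1
    linarith
  have hderiv : ∀ s ∈ Ioo x √(1 - y ^ 2), HasDerivAt (fun s => π / 2 * s - cornerTerm s y)
      (π / 2 - arcsin (y / √(1 - s ^ 2))) s := fun s hs => by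
    have := sq_lt_sq' (by linarith [hs.1]) hs.2
    exact (((hasDerivAt_id' s).const_mul (π / 2)).sub
      (hasDerivAt_cornerTerm (by linarith))).congr_deriv (by ring)
  have hpos : ∀ s ∈ Ioo x √(1 - y ^ 2), 0 ≤ π / 2 - arcsin (y / √(1 - s ^ 2)) := fun s _ =>
    sub_nonneg.2 (arcsin_le_pi_div_two _)
  obtain ⟨hint, heq⟩ := integral_Ioo_eq_sub_of_hasDerivAt_of_nonneg hxb hcont hderiv hpos
  exact ⟨hint, by rw [heq]; ring⟩

lemma cornerTerm_sqrt_one_sub_sq {y : ℝ} (hy0 : 0 ≤ y) (hy1 : y ^ 2 < 1) :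
    cornerTerm √(1 - y ^ 2) y = (√(1 - y ^ 2) + y - 1) * (π / 2) := by
  rcases hy0.eq_or_lt with rfl | hy
  · simp [cornerTerm]
  have hb : 0 < √(1 - y ^ 2) := sqrt_pos.2 (by linarith)
  have hb2 : 1 - √(1 - y ^ 2) ^ 2 = y ^ 2 := by rw [sq_sqrt (by linarith)]; ring
  have hyb : √(y ^ 2 * (1 - y ^ 2)) = y * √(1 - y ^ 2) := by
    rw [sqrt_mul' _ (by linarith), sqrt_sq hy0]
  rw [cornerTerm, hb2, hyb, sqrt_sq hy0, div_self hy.ne', div_self hb.ne', mul_comm _ y,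
    div_self (by positivity), arcsin_one]
  ring

def diskCorner (x y : ℝ) : Set (ℝ × ℝ) :=
  {q | x < q.1 ∧ y < q.2 ∧ q.1 ^ 2 + q.2 ^ 2 < 1}

noncomputable def diskDensity (q : ℝ × ℝ) : ℝ :=
  1 / (2 * π * √(1 - q.1 ^ 2 - q.2 ^ 2))

lemma mk_mem_diskCorner_iff {x y s t : ℝ} (hx : 0 ≤ x) (hy : 0 ≤ y) :
    (s, t) ∈ diskCorner x y ↔ s ∈ Ioo x √(1 - y ^ 2) ∧ t ∈ Ioo y √(1 - s ^ 2) := by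
  simp only [diskCorner, mem_ofPred_eq, mem_Ioo]
  constructor
  · rintro ⟨hxs, hyt, hst⟩
    exact ⟨⟨hxs, (lt_sqrt (by linarith)).2 (by nlinarith)⟩, hyt,
      (lt_sqrt (by linarith)).2 (by linarith)⟩
  · rintro ⟨⟨hxs, -⟩, hyt, hts⟩
    exact ⟨hxs, hyt, by linarith [(lt_sqrt (by linarith)).1 hts]⟩

lemma integral_Ioo_diskDensity {y s : ℝ} (hy : 0 ≤ y) (hs : s ^ 2 + y ^ 2 < 1) :
    IntegrableOn (fun t => diskDensity (s, t)) (Ioo y √(1 - s ^ 2)) ∧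
      ∫ t in Ioo y √(1 - s ^ 2), diskDensity (s, t) =
        (π / 2 - arcsin (y / √(1 - s ^ 2))) / (2 * π) := by
  have hc2 : √(1 - s ^ 2) ^ 2 = 1 - s ^ 2 := sq_sqrt (by nlinarith)
  have hyc : y < √(1 - s ^ 2) := (lt_sqrt hy).2 (by linarith)
  have hdens : (fun t => diskDensity (s, t)) =
      fun t => (2 * π)⁻¹ * (1 / √(√(1 - s ^ 2) ^ 2 - t ^ 2)) := by
    funext t
    rw [diskDensity, hc2]
    field_simp
  obtain ⟨hint, heq⟩ :=
    integral_Ioo_one_div_sqrt_sq_sub_sq (by linarith [sqrt_nonneg (1 - s ^ 2)]) hyc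
  rw [hdens, integral_const_mul, heq]
  exact ⟨hint.const_mul _, by ring⟩

lemma measurableSet_diskCorner (x y : ℝ) : MeasurableSet (diskCorner x y) := by
  unfold diskCorner
  measurability

lemma measurable_diskDensity : Measurable diskDensity := by
  unfold diskDensity
  fun_prop

lemma integral_indicator_diskCorner_slice {x y : ℝ} (hx : 0 ≤ x) (hy : 0 ≤ y) (s : ℝ) :
    Integrable (fun t => (diskCorner x y).indicator diskDensity (s, t)) ∧
      ∫ t, (diskCorner x y).indicator diskDensity (s, t) =
        (Ioo x √(1 - y ^ 2)).indicator
          (fun s => (π / 2 - arcsin (y / √(1 - s ^ 2))) / (2 * π)) s := by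
  by_cases hs : s ∈ Ioo x √(1 - y ^ 2)
  · have hslice : (fun t => (diskCorner x y).indicator diskDensity (s, t)) =
        (Ioo y √(1 - s ^ 2)).indicator (fun t => diskDensity (s, t)) := by
      funext t
      simp only [indicator, mk_mem_diskCorner_iff hx hy, hs, true_and]
    have hs2 : s ^ 2 + y ^ 2 < 1 := by
      have := (lt_sqrt (hx.trans hs.1.le)).1 hs.2
      linarith
    obtain ⟨hint, heq⟩ := integral_Ioo_diskDensity hy hs2
    rw [hslice, integral_indicator measurableSet_Ioo, heq, indicator_of_mem hs]
    exact ⟨hint.integrable_indicator measurableSet_Ioo, rfl⟩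
  · have hslice : (fun t => (diskCorner x y).indicator diskDensity (s, t)) = 0 := by
      funext t
      simp [indicator, mk_mem_diskCorner_iff hx hy, hs]
    rw [hslice, indicator_of_notMem hs]
    exact ⟨integrable_zero _ _ _, integral_zero _ _⟩

theorem stmt_19_general (x y : ℝ) (hx0 : 0 ≤ x) (hy0 : 0 ≤ y)
    (hxy : x ^ 2 + y ^ 2 < 1) :
    ∫ p : ℝ × ℝ,
        Set.indicator {q : ℝ × ℝ | x < q.1 ∧ y < q.2 ∧ q.1 ^ 2 + q.2 ^ 2 < 1}
          (fun q => 1 / (2 * Real.pi * Real.sqrt (1 - q.1 ^ 2 - q.2 ^ 2))) p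
      = (1 - x - y) / 4
        + (1 / (2 * Real.pi)) *
          (x * Real.arcsin (y / Real.sqrt (1 - x ^ 2))
            + y * Real.arcsin (x / Real.sqrt (1 - y ^ 2))
            - Real.arcsin (x * y / Real.sqrt ((1 - x ^ 2) * (1 - y ^ 2)))) := by
  change ∫ p, (diskCorner x y).indicator diskDensity p =
    (1 - x - y) / 4 + 1 / (2 * π) * cornerTerm x y
  have hy2 : y ^ 2 < 1 := by nlinarith
  have hxb : x ≤ √(1 - y ^ 2) := (le_sqrt hx0 (by linarith)).2 (by linarith)
  obtain ⟨hint, hval⟩ :=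
    integral_Ioo_pi_div_two_sub_arcsin hy2 (by linarith [sqrt_nonneg (1 - y ^ 2)]) hxb
  have hslice := integral_indicator_diskCorner_slice hx0 hy0
  have hinner : (fun s => ∫ t, (diskCorner x y).indicator diskDensity (s, t)) =
      (Ioo x √(1 - y ^ 2)).indicator (fun s => (π / 2 - arcsin (y / √(1 - s ^ 2))) / (2 * π)) :=
    funext fun s => (hslice s).2
  have hdens : 0 ≤ (diskCorner x y).indicator diskDensity :=
    indicator_nonneg fun q _ => by unfold diskDensity; positivity
  rw [Measure.volume_eq_prod, integral_prod_eq_of_nonneg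
      ((measurable_diskDensity.indicator (measurableSet_diskCorner x y)).aestronglyMeasurable)
      hdens (ae_of_all _ fun s => (hslice s).1)
      (hinner ▸ IntegrableOn.integrable_indicator (hint.div_const _) measurableSet_Ioo),
    hinner, integral_indicator measurableSet_Ioo, integral_div, hval,
    cornerTerm_sqrt_one_sub_sq hy0 hy2]
  field_simp
  ring

/-- For the circularly symmetric density 1/(2π√(1-s²-t²)) on the open unit disk,
P[X > x, Y > y] = (1-x-y)/4 + α(x,y) for 0 ≤ x,y ≤ 1 with x² + y² < 1. -/
theorem stmt_19 (x y : ℝ) (hx0 : 0 ≤ x) (hx1 : x ≤ 1) (hy0 : 0 ≤ y) (hy1 : y ≤ 1)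
    (hxy : x ^ 2 + y ^ 2 < 1) :
    ∫ p : ℝ × ℝ,
        Set.indicator {q : ℝ × ℝ | x < q.1 ∧ y < q.2 ∧ q.1 ^ 2 + q.2 ^ 2 < 1}
          (fun q => 1 / (2 * Real.pi * Real.sqrt (1 - q.1 ^ 2 - q.2 ^ 2))) p
      = (1 - x - y) / 4
        + (1 / (2 * Real.pi)) *
          (x * Real.arcsin (y / Real.sqrt (1 - x ^ 2))
            + y * Real.arcsin (x / Real.sqrt (1 - y ^ 2))
            - Real.arcsin (x * y / Real.sqrt ((1 - x ^ 2) * (1 - y ^ 2)))) :=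
  stmt_19_general x y hx0 hy0 hxy
end
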